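/- Let N be a project network, k ≤ k_max, and X a k-crashing plan of N; let N_i, X_i, C_i be the associated decomposition. Then for every i with 1 ≤ i < k, cost(C_i) ≤ cost(C_{i+1}). -/

import Mathlib

noncomputable section
open scoped Classical
open Finset

/-- A project network: a finite DAG (witnessed by a rank function) with a single
source `s` and a single sink `t`; each edge `e` carries a minimum length `a e`,
a normal length `b e`, and a nonnegative cost slope `c e`. -/
structure Project where
  V : Type
  E : Type
  [instFV : Fintype V]
  [instDV : DecidableEq V]
  [instFE : Fintype E]
  [instDE : DecidableEq E]
  src : E → V
  dst : E → V
  s : V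
  t : V
  a : E → ℤ
  b : E → ℤ
  c : E → ℝ
  length_lb : ∀ e, a e ≤ b e
  cost_nonneg : ∀ e, 0 ≤ c e
  rank : V → ℕ
  acyclic : ∀ e, rank (src e) < rank (dst e)
  s_no_in : ∀ e, dst e ≠ s
  t_no_out : ∀ e, src e ≠ t
  source_unique : ∀ v, v ≠ s → ∃ e, dst e = v
  sink_unique : ∀ v, v ≠ t → ∃ e, src e = v

attribute [instance] Project.instFV Project.instDV Project.instFE Project.instDE

namespace Project

/-- A network state: a subset of the edges together with current edge lengths. -/
structure State (P : Project) where
  edges : Finset P.E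
  len : P.E → ℤ

variable (P : Project)

/-- `es` is a directed path from the source `s` to the sink `t` using edges of `H`. -/
def IsPath (H : State P) (es : List P.E) : Prop :=
  es ≠ [] ∧ (∀ e ∈ es, e ∈ H.edges) ∧
  List.Chain' (fun e f => P.dst e = P.src f) es ∧
  (∀ e ∈ es.head?, P.src e = P.s) ∧ (∀ e ∈ es.getLast?, P.dst e = P.t)

/-- The length of a path in state `H`. -/
def pathLen (H : State P) (es : List P.E) : ℤ := (es.map H.len).sum

/-- The duration of `H`: the maximum total length of a directed `s`-`t` path. -/
def duration (H : State P) : ℤ :=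
  sSup {L : ℤ | ∃ es, IsPath P H es ∧ pathLen P H es = L}

/-- The critical graph `H*`: the edges of `H` lying on some maximum-length path. -/
def critical (H : State P) : State P :=
  ⟨H.edges.filter (fun e => ∃ es, IsPath P H es ∧ pathLen P H es = duration P H ∧ e ∈ es),
   H.len⟩

/-- An accelerate plan is feasible if each edge is shortened by at most `b e - a e`. -/
def Feasible (X : P.E → ℕ) : Prop := ∀ e, (X e : ℤ) ≤ P.b e - P.a e

/-- The original network `N` (all edges, with their normal lengths). -/
def base : State P := ⟨Finset.univ, P.b⟩

/-- The accelerated network `N(X)`, whose edge lengths are `b e - X e`. -/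
def applyPlan (X : P.E → ℕ) : State P := ⟨Finset.univ, fun e => P.b e - X e⟩

/-- The cost of a plan: `∑ e, c e * x e`. -/
def cost (X : P.E → ℕ) : ℝ := ∑ e, P.c e * (X e : ℝ)

/-- The cost of a set of edges: the sum of their cost slopes. -/
def costSet (C : Finset P.E) : ℝ := ∑ e ∈ C, P.c e

/-- `X` is a `k`-crashing plan of `N`: it is feasible and shortens the duration by `k`. -/
def Crashing (k : ℤ) (X : P.E → ℕ) : Prop :=
  Feasible P X ∧ duration P (applyPlan P X) ≤ duration P (base P) - k

/-- The plan shortening every edge maximally. -/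
def fullPlan : P.E → ℕ := fun e => (P.b e - P.a e).toNat

/-- `k_max = d(N) - d(N(X_full))`. -/
def kmax : ℤ := duration P (base P) - duration P (applyPlan P (fullPlan P))

/-- `C` is the cut of `H` determined by the vertex partition `(S, Sᶜ)` with `s ∈ S`, `t ∉ S`. -/
def IsCutWith (H : State P) (S : Finset P.V) (C : Finset P.E) : Prop :=
  P.s ∈ S ∧ P.t ∉ S ∧ C = H.edges.filter (fun e => P.src e ∈ S ∧ P.dst e ∉ S)

/-- `C` is a cut of `H`. -/
def IsCut (H : State P) (C : Finset P.E) : Prop := ∃ S, IsCutWith P H S C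

/-- The plan `X` contains a cut of `H` (some cut lies inside the support of `X`). -/
def PlanContainsCut (H : State P) (X : P.E → ℕ) : Prop :=
  ∃ C, IsCut P H C ∧ ∀ e ∈ C, 1 ≤ X e

/-- The edge set `D` contains a cut of `H`. -/
def ContainsCut (H : State P) (D : Finset P.E) : Prop :=
  ∃ C, IsCut P H C ∧ C ⊆ D

/-- `C = mincut(H, X)`: a minimum-cost cut of `H` among all cuts contained in `X`. -/
def IsMinCutIn (H : State P) (X : P.E → ℕ) (C : Finset P.E) : Prop :=
  IsCut P H C ∧ (∀ e ∈ C, 1 ≤ X e) ∧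
  ∀ C', IsCut P H C' → (∀ e ∈ C', 1 ≤ X e) → costSet P C ≤ costSet P C'

/-- `H(C)`: the state `H` with every edge of `C` shortened by `1`. -/
def shorten (H : State P) (C : Finset P.E) : State P :=
  ⟨H.edges, fun e => H.len e - if e ∈ C then 1 else 0⟩

/-- The decomposition `N_i, X_i, C_i` associated to a `k`-crashing plan `X`:
`N_1 = N`, `X_1 = X`, `C_i = mincut(N_i*, X_i)`, and for `1 < i ≤ k`,
`N_i = N_{i-1}*(C_{i-1})` and `X_i = X_{i-1} ∖ C_{i-1}`. -/
def Decomp (X : P.E → ℕ) (k : ℕ) (Ns : ℕ → State P) (Xs : ℕ → P.E → ℕ)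
    (Cs : ℕ → Finset P.E) : Prop :=
  Ns 1 = base P ∧ Xs 1 = X ∧
  (∀ i, 1 ≤ i → i ≤ k → IsMinCutIn P (critical P (Ns i)) (Xs i) (Cs i)) ∧
  ∀ i, 1 < i → i ≤ k →
    Ns i = shorten P (critical P (Ns (i - 1))) (Cs (i - 1)) ∧
    Xs i = fun e => Xs (i - 1) e - if e ∈ Cs (i - 1) then 1 else 0

/-- The edges of `H` within the vertex set `S`. -/
def withinEdges (H : State P) (S : Finset P.V) : Finset P.E :=
  H.edges.filter (fun e => P.src e ∈ S ∧ P.dst e ∈ S)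

/-- The edges of `H` within the complement of the vertex set `S`. -/
def outsideEdges (H : State P) (S : Finset P.V) : Finset P.E :=
  H.edges.filter (fun e => P.src e ∉ S ∧ P.dst e ∉ S)

/-- The edges of `H` going from the complement of `S` back into `S`. -/
def reverseCut (H : State P) (S : Finset P.V) : Finset P.E :=
  H.edges.filter (fun e => P.src e ∉ S ∧ P.dst e ∈ S)

/-- `Z` is an `m`-crashing plan of the accelerated network `N(Y)`. -/
def CrashesBy (Y Z : P.E → ℕ) (m : ℤ) : Prop :=
  Feasible P (fun e => Y e + Z e) ∧
  duration P (applyPlan P (fun e => Y e + Z e)) ≤ duration P (applyPlan P Y) - m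

/-- `Z` is a minimum-cost `1`-crashing plan of the accelerated network `N(Y)`. -/
def MinOneCrashOf (Y Z : P.E → ℕ) : Prop :=
  CrashesBy P Y Z 1 ∧ ∀ Z', CrashesBy P Y Z' 1 → cost P Z ≤ cost P Z'

end Project

/-!
Write `M = N_i*`, `C₁ = C_i`, `C₂ = C_{i+1}`. Every `s`–`t` path of `M` has length `d(N_i)`
(maximum paths through a common vertex have equally long prefixes) and crosses `C₁`; hence the
maximum paths of `N_{i+1} = M(C₁)` include every path of `M` crossing `C₁` exactly once.
Delete `C₁ ∪ C₂` from `M`: the vertices reachable from `s`, and the vertices not reaching `t`,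
define two cuts `D₁, D₂` of `M` inside `C₁ ∪ C₂ ⊆ supp X_i`, so `cost C₁ ≤ cost D₁, cost D₂`.
An edge of `D₁ ∩ D₂` lies on a path of `M` meeting `C₁ ∪ C₂` in that edge only; it is therefore
in `C₁`, the path is maximum in `N_{i+1}`, and the edge is in `C₂` too. So `D₁ ∪ D₂ ⊆ C₁ ∪ C₂`
and `D₁ ∩ D₂ ⊆ C₁ ∩ C₂`, whence `2 cost C₁ ≤ cost D₁ + cost D₂ ≤ cost C₁ + cost C₂`.
-/

namespace Project

def IsWalk (P : Project) : P.V → P.V → List P.E → Prop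
  | u, v, [] => u = v
  | u, v, e :: es => P.src e = u ∧ IsWalk P (P.dst e) v es

variable {P : Project}

@[simp] lemma isWalk_nil {u v : P.V} : IsWalk P u v [] ↔ u = v := Iff.rfl

@[simp] lemma isWalk_cons {u v : P.V} {e : P.E} {es : List P.E} :
    IsWalk P u v (e :: es) ↔ P.src e = u ∧ IsWalk P (P.dst e) v es := Iff.rfl

lemma isWalk_append {u w : P.V} {A B : List P.E} :
    IsWalk P u w (A ++ B) ↔ ∃ v, IsWalk P u v A ∧ IsWalk P v w B := by
  induction A generalizing u with
  | nil => simp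
  | cons e A ih => simp [ih, and_assoc]

lemma IsWalk.unique {u v w : P.V} {es : List P.E} (h : IsWalk P u v es)
    (h' : IsWalk P u w es) : v = w := by
  induction es generalizing u with
  | nil => exact h.symm.trans h'
  | cons e es ih => exact ih h.2 h'.2

lemma IsWalk.rank_le {u v : P.V} {es : List P.E} (h : IsWalk P u v es) :
    P.rank u ≤ P.rank v := by
  induction es generalizing u with
  | nil => exact h ▸ le_rfl
  | cons e es ih => exact h.1 ▸ (P.acyclic e).le.trans (ih h.2)

lemma IsWalk.eq_nil_of_eq {u : P.V} {es : List P.E} (h : IsWalk P u u es) : es = [] := by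
  cases es with
  | nil => rfl
  | cons e es =>
    exact absurd (h.1 ▸ (P.acyclic e).trans_le h.2.rank_le) (lt_irrefl _)

lemma IsWalk.rank_le_src_of_mem {u v : P.V} {es : List P.E} (h : IsWalk P u v es)
    {f : P.E} (hf : f ∈ es) : P.rank u ≤ P.rank (P.src f) := by
  induction es generalizing u with
  | nil => simp at hf
  | cons e es ih =>
    rcases List.mem_cons.1 hf with rfl | hf
    · exact h.1 ▸ le_rfl
    · exact h.1 ▸ (P.acyclic e).le.trans (ih h.2 hf)

lemma IsWalk.nodup {u v : P.V} {es : List P.E} (h : IsWalk P u v es) : es.Nodup := by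
  induction es generalizing u with
  | nil => exact List.nodup_nil
  | cons e es ih =>
    refine List.nodup_cons.2 ⟨fun he => ?_, ih h.2⟩
    exact absurd (h.2.rank_le_src_of_mem he) (not_le.2 (P.acyclic e))

lemma IsWalk.exists_mem_crossing {S : Finset P.V} {u v : P.V} {es : List P.E}
    (h : IsWalk P u v es) (hu : u ∈ S) (hv : v ∉ S) :
    ∃ e ∈ es, P.src e ∈ S ∧ P.dst e ∉ S := by
  induction es generalizing u with
  | nil => exact absurd (h ▸ hu) hv
  | cons e es ih =>
    by_cases he : P.dst e ∈ S
    · obtain ⟨f, hf, hfS⟩ := ih h.2 he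
      exact ⟨f, List.mem_cons_of_mem e hf, hfS⟩
    · exact ⟨e, List.mem_cons_self, h.1 ▸ hu, he⟩

lemma isWalk_iff_chain {u v : P.V} {es : List P.E} (hne : es ≠ []) :
    IsWalk P u v es ↔ List.IsChain (fun e f => P.dst e = P.src f) es ∧
      (∀ e ∈ es.head?, P.src e = u) ∧ (∀ e ∈ es.getLast?, P.dst e = v) := by
  induction es generalizing u with
  | nil => exact absurd rfl hne
  | cons e es ih =>
    rcases es with _ | ⟨f, es⟩
    · simp [eq_comm]
    · rw [isWalk_cons, ih (List.cons_ne_nil f es), List.isChain_cons_cons]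
      simp only [List.head?_cons, Option.mem_some_iff, forall_eq', List.getLast?_cons_cons]
      constructor
      · rintro ⟨rfl, hc, hf, hl⟩
        exact ⟨⟨hf.symm, hc⟩, rfl, hl⟩
      · rintro ⟨⟨hf, hc⟩, rfl, hl⟩
        exact ⟨rfl, hc, hf.symm, hl⟩

lemma isPath_iff {H : State P} {es : List P.E} :
    IsPath P H es ↔ es ≠ [] ∧ (∀ e ∈ es, e ∈ H.edges) ∧ IsWalk P P.s P.t es := by
  refine ⟨fun h => ⟨h.1, h.2.1, (isWalk_iff_chain h.1).2 h.2.2⟩,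
    fun ⟨hne, hH, hw⟩ => ⟨hne, hH, (isWalk_iff_chain hne).1 hw⟩⟩

lemma IsPath.mono {H H' : State P} (hHH' : H.edges ⊆ H'.edges) {es : List P.E}
    (h : IsPath P H es) : IsPath P H' es :=
  ⟨h.1, fun e he => hHH' (h.2.1 e he), h.2.2⟩

lemma IsPath.of_critical {H : State P} {es : List P.E} (h : IsPath P (critical P H) es) :
    IsPath P H es :=
  h.mono (Finset.filter_subset _ _)

@[simp] lemma pathLen_append (H : State P) (A B : List P.E) :
    pathLen P H (A ++ B) = pathLen P H A + pathLen P H B := by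
  simp [pathLen]

@[simp] lemma pathLen_cons (H : State P) (e : P.E) (es : List P.E) :
    pathLen P H (e :: es) = H.len e + pathLen P H es := by
  simp [pathLen]

@[simp] lemma pathLen_nil (H : State P) : pathLen P H [] = 0 := rfl

lemma pathLen_shorten (H : State P) (C : Finset P.E) (es : List P.E) :
    pathLen P (shorten P H C) es = pathLen P H es - es.countP (· ∈ C) := by
  induction es with
  | nil => simp
  | cons e es ih =>
    rw [pathLen_cons, ih, pathLen_cons, List.countP_cons]
    simp only [shorten, decide_eq_true_eq]
    split_ifs <;> push_cast <;> ring

-- Paths do not repeat edges, so their lengths are among the finitely many edge-subset sums.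
lemma bddAbove_pathLens (H : State P) :
    BddAbove {L : ℤ | ∃ es, IsPath P H es ∧ pathLen P H es = L} := by
  refine (Set.Finite.subset (Finset.finite_toSet
    ((Finset.univ : Finset P.E).powerset.image fun D => ∑ e ∈ D, H.len e)) ?_).bddAbove
  rintro L ⟨es, hes, rfl⟩
  refine Finset.mem_coe.2 (Finset.mem_image.2 ⟨es.toFinset, Finset.mem_powerset.2 (by simp), ?_⟩)
  rw [List.sum_toFinset _ (isPath_iff.1 hes).2.2.nodup]
  rfl

lemma IsPath.pathLen_le_duration {H : State P} {es : List P.E} (h : IsPath P H es) :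
    pathLen P H es ≤ duration P H :=
  le_csSup (bddAbove_pathLens H) ⟨es, h, rfl⟩

lemma IsPath.pathLen_eq_duration {H : State P} {es : List P.E} (h : IsPath P H es)
    (hmax : ∀ Q, IsPath P H Q → pathLen P H Q ≤ pathLen P H es) :
    pathLen P H es = duration P H :=
  h.pathLen_le_duration.antisymm <| csSup_le ⟨_, es, h, rfl⟩ fun _ ⟨Q, hQ, hL⟩ => hL ▸ hmax Q hQ

lemma IsPath.isPath_critical {H : State P} {es : List P.E} (h : IsPath P H es)
    (hmax : ∀ Q, IsPath P H Q → pathLen P H Q ≤ pathLen P H es) :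
    IsPath P (critical P H) es :=
  ⟨h.1, fun e he => Finset.mem_filter.2 ⟨h.2.1 e he, es, h, h.pathLen_eq_duration hmax, he⟩,
    h.2.2⟩

def IsMaxPrefix (H : State P) (v : P.V) (A : List P.E) : Prop :=
  IsWalk P P.s v A ∧ ∃ B, IsPath P H (A ++ B) ∧ pathLen P H (A ++ B) = duration P H

lemma IsPath.splice {H : State P} {v : P.V} {A B A' B' : List P.E}
    (h : IsPath P H (A ++ B)) (h' : IsPath P H (A' ++ B')) (hA : IsWalk P P.s v A)
    (hA' : IsWalk P P.s v A') : IsPath P H (A ++ B') := by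
  obtain ⟨hne, hH, hw⟩ := isPath_iff.1 h
  obtain ⟨-, hH', hw'⟩ := isPath_iff.1 h'
  obtain ⟨w, hA'w, hB'⟩ := isWalk_append.1 hw'
  have hAB' : IsWalk P P.s P.t (A ++ B') := isWalk_append.2 ⟨v, hA, hA'.unique hA'w ▸ hB'⟩
  refine isPath_iff.2 ⟨fun hnil => hne ?_, fun f hf => ?_, hAB'⟩
  · rw [hnil, isWalk_nil] at hAB'
    exact (hAB' ▸ hw).eq_nil_of_eq
  · rcases List.mem_append.1 hf with hf | hf
    · exact hH f (List.mem_append_left B hf)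
    · exact hH' f (List.mem_append_right A' hf)

-- Exchanging the tails of two maximum paths through `v` gives paths again.
lemma IsMaxPrefix.pathLen_eq {H : State P} {v : P.V} {A A' : List P.E}
    (hA : IsMaxPrefix H v A) (hA' : IsMaxPrefix H v A') : pathLen P H A = pathLen P H A' := by
  obtain ⟨hwA, B, hp, hlen⟩ := hA
  obtain ⟨hwA', B', hp', hlen'⟩ := hA'
  have h₁ := (hp.splice hp' hwA hwA').pathLen_le_duration
  have h₂ := (hp'.splice hp hwA' hwA).pathLen_le_duration
  simp only [pathLen_append] at *
  linarith

lemma IsMaxPrefix.pathLen_add_eq_duration {H : State P} {v : P.V} {A R : List P.E}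
    (hA : IsMaxPrefix H v A) (hR : IsWalk P v P.t R)
    (hRH : ∀ e ∈ R, e ∈ (critical P H).edges) :
    pathLen P H A + pathLen P H R = duration P H := by
  induction R generalizing v A with
  | nil =>
    obtain ⟨hwA, B, hp, hlen⟩ := hA
    obtain ⟨w, hwA', hB⟩ := isWalk_append.1 (isPath_iff.1 hp).2.2
    rw [← hwA.unique hwA', isWalk_nil.1 hR] at hB
    simpa [hB.eq_nil_of_eq] using hlen
  | cons e R ih =>
    obtain ⟨Q, hQ, hQlen, heQ⟩ := (Finset.mem_filter.1 (hRH e List.mem_cons_self)).2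
    obtain ⟨A', B', rfl⟩ := List.append_of_mem heQ
    obtain ⟨w, hA'w, hB'⟩ := isWalk_append.1 (isPath_iff.1 hQ).2.2
    have hA' : IsMaxPrefix H v A' := ⟨by rwa [← hR.1, hB'.1], e :: B', hQ, hQlen⟩
    have hA'e : IsMaxPrefix H (P.dst e) (A' ++ [e]) :=
      ⟨isWalk_append.2 ⟨w, hA'w, by simp [hB'.1]⟩, B', by simpa using hQ, by simpa using hQlen⟩
    have h₁ := ih hA'e hR.2 fun f hf => hRH f (List.mem_cons_of_mem e hf)
    have h₂ := hA.pathLen_eq hA'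
    simp only [pathLen_append, pathLen_cons, pathLen_nil] at h₁ ⊢
    linarith

lemma pathLen_eq_duration_of_isPath_critical {H : State P} {es : List P.E}
    (h : IsPath P (critical P H) es) : pathLen P H es = duration P H := by
  obtain ⟨hne, hcrit, hw⟩ := isPath_iff.1 h
  obtain ⟨Q, hQ, hQlen, -⟩ := (Finset.mem_filter.1 (hcrit _ (List.head_mem hne))).2
  simpa using (show IsMaxPrefix H P.s [] from ⟨rfl, Q, hQ, hQlen⟩).pathLen_add_eq_duration hw hcrit

lemma IsCut.exists_mem_of_isWalk {H : State P} {C : Finset P.E} (hC : IsCut P H C)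
    {es : List P.E} (hH : ∀ e ∈ es, e ∈ H.edges) (hw : IsWalk P P.s P.t es) :
    ∃ e ∈ es, e ∈ C := by
  obtain ⟨S, hs, ht, rfl⟩ := hC
  obtain ⟨e, he, hcross⟩ := hw.exists_mem_crossing hs ht
  exact ⟨e, he, Finset.mem_filter.2 ⟨hH e he, hcross⟩⟩

lemma IsCut.mem_of_isPath_append_cons {H : State P} {C : Finset P.E} (hC : IsCut P H C)
    {X Y : List P.E} {e : P.E} (hp : IsPath P H (X ++ e :: Y)) (hXY : ∀ f ∈ X ++ Y, f ∉ C) :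
    e ∈ C := by
  obtain ⟨-, hH, hw⟩ := isPath_iff.1 hp
  obtain ⟨f, hf, hfC⟩ := hC.exists_mem_of_isWalk hH hw
  by_contra he
  have hfe : f ≠ e := fun h => he (h ▸ hfC)
  simp only [List.mem_append, List.mem_cons, hfe, false_or] at hf
  exact hXY f (List.mem_append.2 hf) hfC

-- All paths of `H*` have length `d(H)` and cross `C`, so in `H*(C)` each loses at least `1`.
lemma isPath_critical_shorten {H : State P} {C : Finset P.E} (hC : IsCut P (critical P H) C)
    {X Y : List P.E} {e : P.E} (hp : IsPath P (critical P H) (X ++ e :: Y)) (he : e ∈ C)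
    (hXY : ∀ f ∈ X ++ Y, f ∉ C) :
    IsPath P (critical P (shorten P (critical P H) C)) (X ++ e :: Y) := by
  refine IsPath.isPath_critical hp fun Q hQ => ?_
  have hcount : (X ++ e :: Y).countP (· ∈ C) = 1 := by
    have : ∀ f ∈ X ++ Y, ¬ decide (f ∈ C) := by simpa using hXY
    simp only [List.countP_append, List.countP_cons, he, decide_true, if_true]
    rw [List.countP_eq_zero.2 fun f hf => this f (List.mem_append_left Y hf),
      List.countP_eq_zero.2 fun f hf => this f (List.mem_append_right X hf)]
  have hQC : 0 < Q.countP (· ∈ C) := by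
    obtain ⟨-, hH, hw⟩ := isPath_iff.1 hQ
    obtain ⟨f, hf, hfC⟩ := hC.exists_mem_of_isWalk hH hw
    exact List.countP_pos_iff.2 ⟨f, hf, by simpa using hfC⟩
  have hQlen : pathLen P H Q = duration P H := pathLen_eq_duration_of_isPath_critical hQ
  have hlen : pathLen P H (X ++ e :: Y) = duration P H :=
    pathLen_eq_duration_of_isPath_critical hp
  rw [pathLen_shorten, pathLen_shorten, hcount]
  change pathLen P H Q - _ ≤ pathLen P H _ - _
  omega

def ReachableVia (D : Finset P.E) (u v : P.V) : Prop :=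
  ∃ es, (∀ e ∈ es, e ∈ D) ∧ IsWalk P u v es

lemma ReachableVia.snoc {D : Finset P.E} {u : P.V} {e : P.E}
    (h : ReachableVia D u (P.src e)) (he : e ∈ D) : ReachableVia D u (P.dst e) := by
  obtain ⟨es, hD, hw⟩ := h
  refine ⟨es ++ [e], fun f hf => ?_, isWalk_append.2 ⟨_, hw, by simp⟩⟩
  rcases List.mem_append.1 hf with hf | hf
  · exact hD f hf
  · exact List.mem_singleton.1 hf ▸ he

lemma ReachableVia.cons {D : Finset P.E} {v : P.V} {e : P.E}
    (he : e ∈ D) (h : ReachableVia D (P.dst e) v) : ReachableVia D (P.src e) v := by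
  obtain ⟨es, hD, hw⟩ := h
  exact ⟨e :: es, List.forall_mem_cons.2 ⟨he, hD⟩, rfl, hw⟩

-- `D₁` and `D₂` are the cuts of `H` determined by the vertices reachable from `s`, and by those
-- not reaching `t`, in `H` with the edges of `A` removed.
lemma exists_cuts_subset_of_forall_walk_meets {H : State P} {A : Finset P.E}
    (hA : ∀ es, (∀ e ∈ es, e ∈ H.edges) → IsWalk P P.s P.t es → ∃ e ∈ es, e ∈ A) :
    ∃ D₁ D₂, IsCut P H D₁ ∧ IsCut P H D₂ ∧ D₁ ∪ D₂ ⊆ A ∧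
      ∀ e ∈ D₁ ∩ D₂, ∃ X Y, IsPath P H (X ++ e :: Y) ∧ ∀ f ∈ X ++ Y, f ∉ A := by
  set D := H.edges.filter (· ∉ A)
  have hst : ¬ ReachableVia D P.s P.t := by
    rintro ⟨es, hD, hw⟩
    obtain ⟨e, he, heA⟩ := hA es (fun e he => (Finset.mem_filter.1 (hD e he)).1) hw
    exact (Finset.mem_filter.1 (hD e he)).2 heA
  refine ⟨_, _, ⟨Finset.univ.filter (ReachableVia D P.s), ?_, ?_, rfl⟩,
    ⟨Finset.univ.filter (¬ ReachableVia D · P.t), ?_, ?_, rfl⟩, ?_, ?_⟩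
  · simpa using ⟨[], by simp, rfl⟩
  · simpa using hst
  · simpa using hst
  · simpa using ⟨[], by simp, rfl⟩
  · intro e he
    simp only [Finset.mem_union, Finset.mem_filter, Finset.mem_univ, true_and, not_not] at he
    by_contra heA
    rcases he with ⟨heH, hs, hd⟩ | ⟨heH, hs, hd⟩
    · exact hd (hs.snoc (Finset.mem_filter.2 ⟨heH, heA⟩))
    · exact hs (hd.cons (Finset.mem_filter.2 ⟨heH, heA⟩))
  · intro e he
    simp only [Finset.mem_inter, Finset.mem_filter, Finset.mem_univ, true_and, not_not] at he
    obtain ⟨⟨heH, ⟨X, hX, hwX⟩, -⟩, -, -, ⟨Y, hY, hwY⟩⟩ := he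
    have hXY : ∀ f ∈ X ++ Y, f ∈ D := fun f hf => (List.mem_append.1 hf).elim (hX f) (hY f)
    refine ⟨X, Y, isPath_iff.2 ⟨by simp, fun f hf => ?_, isWalk_append.2 ⟨_, hwX, rfl, hwY⟩⟩,
      fun f hf => (Finset.mem_filter.1 (hXY f hf)).2⟩
    simp only [List.mem_append, List.mem_cons] at hf
    rcases hf with hf | rfl | hf
    · exact (Finset.mem_filter.1 (hX f hf)).1
    · exact heH
    · exact (Finset.mem_filter.1 (hY f hf)).1

lemma costSet_add_costSet_le {C₁ C₂ D₁ D₂ : Finset P.E} (hunion : D₁ ∪ D₂ ⊆ C₁ ∪ C₂)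
    (hinter : D₁ ∩ D₂ ⊆ C₁ ∩ C₂) :
    costSet P D₁ + costSet P D₂ ≤ costSet P C₁ + costSet P C₂ := by
  rw [costSet, costSet, costSet, costSet, ← Finset.sum_union_inter (s₁ := D₁),
    ← Finset.sum_union_inter (s₁ := C₁)]
  exact add_le_add (Finset.sum_le_sum_of_subset_of_nonneg hunion fun e _ _ => P.cost_nonneg e)
    (Finset.sum_le_sum_of_subset_of_nonneg hinter fun e _ _ => P.cost_nonneg e)

end Project

theorem decomp_cut_cost_mono_general (P : Project) (k : ℕ)
    (X : P.E → ℕ)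
    (Ns : ℕ → Project.State P) (Xs : ℕ → P.E → ℕ) (Cs : ℕ → Finset P.E)
    (hD : Project.Decomp P X k Ns Xs Cs)
    (i : ℕ) (hi1 : 1 ≤ i) (hik : i < k) :
    Project.costSet P (Cs i) ≤ Project.costSet P (Cs (i + 1)) := by
  open Project in
  obtain ⟨-, -, hmin, hstep⟩ := hD
  obtain ⟨hC₁, hC₁X, hC₁min⟩ := hmin i hi1 hik.le
  obtain ⟨hC₂, hC₂X, -⟩ := hmin (i + 1) (by omega) hik
  obtain ⟨hN, hX⟩ := hstep (i + 1) (by omega) hik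
  rw [Nat.add_sub_cancel] at hN hX
  have hAX : ∀ e ∈ Cs i ∪ Cs (i + 1), 1 ≤ Xs i e := by
    intro e he
    rcases Finset.mem_union.1 he with he | he
    · exact hC₁X e he
    · have h := hC₂X e he
      rw [hX] at h
      exact h.trans (Nat.sub_le _ _)
  obtain ⟨D₁, D₂, hD₁, hD₂, hDA, hDD⟩ := exists_cuts_subset_of_forall_walk_meets
    (A := Cs i ∪ Cs (i + 1)) fun es hH hw =>
      (hC₁.exists_mem_of_isWalk hH hw).imp fun _ ⟨he, heC⟩ => ⟨he, Finset.mem_union_left _ heC⟩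
  have hinter : D₁ ∩ D₂ ⊆ Cs i ∩ Cs (i + 1) := by
    intro e he
    obtain ⟨Y, Z, hp, hYZ⟩ := hDD e he
    have hYZ₁ : ∀ f ∈ Y ++ Z, f ∉ Cs i := fun f hf hfC => hYZ f hf (Finset.mem_union_left _ hfC)
    have hYZ₂ : ∀ f ∈ Y ++ Z, f ∉ Cs (i + 1) :=
      fun f hf hfC => hYZ f hf (Finset.mem_union_right _ hfC)
    have he₁ := hC₁.mem_of_isPath_append_cons hp hYZ₁
    have hp' := isPath_critical_shorten hC₁ hp he₁ hYZ₁
    rw [← hN] at hp'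
    exact Finset.mem_inter.2 ⟨he₁, hC₂.mem_of_isPath_append_cons hp' hYZ₂⟩
  have h₁ := hC₁min D₁ hD₁ fun e he => hAX e (hDA (Finset.mem_union_left _ he))
  have h₂ := hC₁min D₂ hD₂ fun e he => hAX e (hDA (Finset.mem_union_right _ he))
  linarith [costSet_add_costSet_le hDA hinter]

/-- in the decomposition, `cost(C_i) ≤ cost(C_{i+1})` for `1 ≤ i < k`. -/
theorem decomp_cut_cost_mono (P : Project) (k : ℕ) (hkmax : (k : ℤ) ≤ Project.kmax P)
    (X : P.E → ℕ) (hX : Project.Crashing P (k : ℤ) X)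
    (Ns : ℕ → Project.State P) (Xs : ℕ → P.E → ℕ) (Cs : ℕ → Finset P.E)
    (hD : Project.Decomp P X k Ns Xs Cs)
    (i : ℕ) (hi1 : 1 ≤ i) (hik : i < k) :
    Project.costSet P (Cs i) ≤ Project.costSet P (Cs (i + 1)) :=
  decomp_cut_cost_mono_general P k X Ns Xs Cs hD i hi1 hik
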